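/- Let L be a finitely generated free abelian group. The exponential map exp : ℤ[L] → ∏_{k≥0} S^k(L)⊗ℚ, defined as the linear extension of l ↦ Σ_{k≥0} l^k ⊗ 1/k!, is an injective ring homomorphism into the completed rational symmetric algebra. -/

import Mathlib

open MonoidAlgebra

/-- The free abelian group of rank `n`, written multiplicatively. -/
abbrev FreeAb (n : ℕ) : Type := Multiplicative (Fin n → ℤ)

/-- The degree-one element of `S(L)⊗ℚ = ℚ[X₁,…,Xₙ]` corresponding to `l ∈ L`. -/
noncomputable def linQ (n : ℕ) (l : FreeAb n) : MvPolynomial (Fin n) ℚ :=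
  ∑ i : Fin n, (Multiplicative.toAdd l i) • MvPolynomial.X i

/-- The exponential `exp(l) = Σ_k l^k/k!` of `l ∈ L`, as an element of the
completed rational symmetric algebra `Ŝ(L)⊗ℚ = ℚ[[X₁,…,Xₙ]]`: its component on a
monomial `d` of total degree `k` is the `d`-coefficient of `l^k/k!`. -/
noncomputable def expElem (n : ℕ) (l : FreeAb n) : MvPowerSeries (Fin n) ℚ :=
  fun d => (((d.sum fun _ m => m).factorial : ℚ))⁻¹ *
    MvPolynomial.coeff d (linQ n l ^ (d.sum fun _ m => m))

lemma linQ_eq (n : ℕ) (l : FreeAb n) :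
    linQ n l = ∑ i, MvPolynomial.C ((Multiplicative.toAdd l i : ℤ) : ℚ) * MvPolynomial.X i := by
  refine Finset.sum_congr rfl fun i _ => ?_
  rw [← Int.cast_smul_eq_zsmul ℚ, MvPolynomial.smul_eq_C_mul]

lemma prod_X_pow_univ (n : ℕ) (g : Fin n → ℕ) :
    (∏ i : Fin n, (MvPolynomial.X i : MvPolynomial (Fin n) ℚ) ^ g i) =
      MvPolynomial.monomial (Finsupp.equivFunOnFinite.symm g) 1 := by
  rw [← MvPolynomial.prod_X_pow_eq_monomial]
  simp only [Finsupp.coe_equivFunOnFinite_symm]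
  refine (Finset.prod_subset (Finset.subset_univ _) fun i _ hi => ?_).symm
  have : g i = 0 := by
    have := Finsupp.notMem_support_iff.mp hi
    simpa using this
  simp [this]

lemma coeff_linQ_pow (n : ℕ) (l : FreeAb n) (d : Fin n →₀ ℕ) :
    MvPolynomial.coeff d (linQ n l ^ (∑ i, d i)) =
      (Nat.multinomial Finset.univ ⇑d : ℚ) * ∏ i, ((Multiplicative.toAdd l i : ℤ) : ℚ) ^ d i := by
  classical
  rw [linQ_eq, Finset.sum_pow_eq_sum_piAntidiag, MvPolynomial.coeff_sum]
  have key : ∀ g : Fin n → ℕ,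
      MvPolynomial.coeff d ((Nat.multinomial Finset.univ g : MvPolynomial (Fin n) ℚ) *
        ∏ i, (MvPolynomial.C ((Multiplicative.toAdd l i : ℤ) : ℚ) * MvPolynomial.X i) ^ g i) =
      (Nat.multinomial Finset.univ g : ℚ) *
        (∏ i, ((Multiplicative.toAdd l i : ℤ) : ℚ) ^ g i) *
        (if g = ⇑d then 1 else 0) := by
    intro g
    simp_rw [mul_pow, Finset.prod_mul_distrib, ← map_pow, ← map_prod, prod_X_pow_univ,
      ← map_natCast (MvPolynomial.C (σ := Fin n) (R := ℚ)), ← mul_assoc, ← map_mul,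
      MvPolynomial.coeff_C_mul, MvPolynomial.coeff_monomial]
    simp only [Equiv.symm_apply_eq]
    rfl
  simp_rw [key, mul_ite, mul_one, mul_zero, Finset.sum_ite_eq' _ ⇑d]
  rw [if_pos]
  simp [Finset.mem_piAntidiag]

lemma expElem_apply (n : ℕ) (l : FreeAb n) (d : Fin n →₀ ℕ) :
    expElem n l d = (∏ i, ((d i).factorial : ℚ))⁻¹ *
      ∏ i, ((Multiplicative.toAdd l i : ℤ) : ℚ) ^ d i := by
  have hk : (d.sum fun _ m => m) = ∑ i, d i := Finsupp.sum_fintype _ _ fun _ => rfl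
  show (((d.sum fun _ m => m).factorial : ℚ))⁻¹ *
    MvPolynomial.coeff d (linQ n l ^ (d.sum fun _ m => m)) = _
  rw [hk, coeff_linQ_pow]
  have hs := Nat.multinomial_spec Finset.univ ⇑d
  have h1 : ((∑ i, d i).factorial : ℚ) =
      (∏ i, ((d i).factorial : ℚ)) * (Nat.multinomial Finset.univ ⇑d : ℚ) := by
    rw [← hs]; push_cast; ring
  have hfac : (∏ i, ((d i).factorial : ℚ)) ≠ 0 :=
    Finset.prod_ne_zero_iff.mpr fun i _ => Nat.cast_ne_zero.mpr (Nat.factorial_ne_zero _)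
  have hm : (Nat.multinomial Finset.univ ⇑d : ℚ) ≠ 0 :=
    Nat.cast_ne_zero.mpr (Nat.multinomial_pos _ _).ne'
  rw [h1, mul_inv]
  field_simp

lemma expElem_one (n : ℕ) : expElem n (1 : FreeAb n) = 1 := by
  classical
  apply MvPowerSeries.ext; intro d
  have h1 : (MvPowerSeries.coeff d) (expElem n 1) = expElem n 1 d := rfl
  rw [h1, MvPowerSeries.coeff_one, expElem_apply]
  by_cases hd : d = 0
  · subst hd; simp
  · rw [if_neg hd]
    obtain ⟨i, hi⟩ : ∃ i, d i ≠ 0 := by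
      by_contra h
      push_neg at h
      exact hd (Finsupp.ext fun i => h i)
    have hz : ((Multiplicative.toAdd (1 : FreeAb n) i : ℤ) : ℚ) ^ d i = 0 := by
      simp [zero_pow hi]
    have hz2 : ∏ i, ((Multiplicative.toAdd (1 : FreeAb n) i : ℤ) : ℚ) ^ d i = 0 :=
      Finset.prod_eq_zero (Finset.mem_univ i) hz
    rw [hz2, mul_zero]

lemma binom_aux (x y : ℚ) (m : ℕ) :
    ((m.factorial : ℚ))⁻¹ * (x + y) ^ m =
      ∑ j ∈ Finset.range (m + 1),
        (((j.factorial : ℚ))⁻¹ * x ^ j) * ((((m - j).factorial : ℚ))⁻¹ * y ^ (m - j)) := by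
  rw [add_pow, Finset.mul_sum]
  refine Finset.sum_congr rfl fun j hj => ?_
  have hjm : j ≤ m := Nat.lt_succ_iff.mp (Finset.mem_range.mp hj)
  have key : (m.factorial : ℚ) = (m.choose j) * j.factorial * (m - j).factorial := by
    exact_mod_cast (Nat.choose_mul_factorial_mul_factorial hjm).symm
  have h0 : ∀ k : ℕ, ((k.factorial : ℚ)) ≠ 0 := fun k =>
    Nat.cast_ne_zero.mpr (Nat.factorial_ne_zero _)
  rw [key]
  have hc : (0:ℚ) < m.choose j := by
    exact_mod_cast Nat.choose_pos hjm
  field_simp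

lemma expElem_mul (n : ℕ) (a b : FreeAb n) :
    expElem n (a * b) = expElem n a * expElem n b := by
  classical
  apply MvPowerSeries.ext; intro d
  have h1 : ∀ (l : FreeAb n) (e : Fin n →₀ ℕ),
      (MvPowerSeries.coeff e) (expElem n l) = expElem n l e := fun _ _ => rfl
  rw [MvPowerSeries.coeff_mul, h1, expElem_apply]
  simp_rw [h1, expElem_apply]
  have hxy : ∀ i, ((Multiplicative.toAdd (a * b) i : ℤ) : ℚ) =
      ((Multiplicative.toAdd a i : ℤ) : ℚ) + ((Multiplicative.toAdd b i : ℤ) : ℚ) := by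
    intro i; rw [toAdd_mul, Pi.add_apply]; push_cast; ring
  simp_rw [hxy]
  set x : Fin n → ℚ := fun i => ((Multiplicative.toAdd a i : ℤ) : ℚ) with hx
  set y : Fin n → ℚ := fun i => ((Multiplicative.toAdd b i : ℤ) : ℚ) with hy
  -- rewrite LHS as a product of sums
  rw [← Finset.prod_inv_distrib, ← Finset.prod_mul_distrib]
  simp_rw [binom_aux]
  rw [Finset.prod_univ_sum]
  -- now a sum over Fintype.piFinset; biject with the antidiagonal
  refine Finset.sum_nbij' (fun t => (Finsupp.equivFunOnFinite.symm t,
      d - Finsupp.equivFunOnFinite.symm t)) (fun p => ⇑p.1) ?_ ?_ ?_ ?_ ?_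
  · intro t ht
    rw [Finset.HasAntidiagonal.mem_antidiagonal]
    have hle : Finsupp.equivFunOnFinite.symm t ≤ d := by
      rw [Finsupp.le_def]
      intro i
      have := Fintype.mem_piFinset.mp ht i
      simpa [Nat.lt_succ_iff] using this
    exact add_tsub_cancel_of_le hle
  · intro p hp
    rw [Finset.HasAntidiagonal.mem_antidiagonal] at hp
    rw [Fintype.mem_piFinset]
    intro i
    have : p.1 i + p.2 i = d i := by rw [← Finsupp.add_apply, hp]
    simp [Nat.lt_succ_iff]
    omega
  · intro t ht
    rfl
  · intro p hp
    rw [Finset.HasAntidiagonal.mem_antidiagonal] at hp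
    refine Prod.ext ?_ ?_
    · simp
    · simp only
      rw [Finsupp.equivFunOnFinite_symm_coe, ← hp, add_tsub_cancel_left]
  · intro t ht
    have happ : ∀ i, (Finsupp.equivFunOnFinite.symm t) i = t i := fun i => rfl
    have hsub : ∀ i, (d - Finsupp.equivFunOnFinite.symm t) i = d i - t i := by
      intro i; rw [Finsupp.tsub_apply, happ]
    simp only [happ, hsub]
    rw [← Finset.prod_inv_distrib, ← Finset.prod_inv_distrib, ← Finset.prod_mul_distrib,
      ← Finset.prod_mul_distrib, ← Finset.prod_mul_distrib]


/-- The linear extension `exp : ℤ[L] → Ŝ(L)⊗ℚ` of `l ↦ Σ_k l^k ⊗ 1/k!`. -/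
noncomputable def expMap (n : ℕ) :
    MonoidAlgebra ℤ (FreeAb n) →ₗ[ℤ] MvPowerSeries (Fin n) ℚ :=
  Finsupp.lift (MvPowerSeries (Fin n) ℚ) ℤ (FreeAb n) (expElem n) ∘ₗ
    (MonoidAlgebra.coeffLinearEquiv ℤ).toLinearMap

noncomputable def expMonoidHom (n : ℕ) : FreeAb n →* MvPowerSeries (Fin n) ℚ where
  toFun := expElem n
  map_one' := expElem_one n
  map_mul' := expElem_mul n

lemma expMap_eq (n : ℕ) (f : MonoidAlgebra ℤ (FreeAb n)) :
    expMap n f =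
      (MonoidAlgebra.lift ℤ (MvPowerSeries (Fin n) ℚ) (FreeAb n)) (expMonoidHom n) f := by
  induction f using MonoidAlgebra.induction_linear with
  | zero => simp
  | add f g hf hg => rw [map_add, map_add, hf, hg]
  | single l c =>
    rw [MonoidAlgebra.lift_single]
    show (Finsupp.lift (MvPowerSeries (Fin n) ℚ) ℤ (FreeAb n) (expElem n))
        (Finsupp.single l c) = c • expMonoidHom n l
    rw [Finsupp.lift_apply, Finsupp.sum_single_index (by simp)]
    rfl

noncomputable def chi (n : ℕ) (l : FreeAb n) : Multiplicative (Fin n →₀ ℕ) →* ℚ where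
  toFun := fun D => ∏ i, ((Multiplicative.toAdd l i : ℤ) : ℚ) ^ (Multiplicative.toAdd D i)
  map_one' := by simp
  map_mul' := by
    intro D E
    simp [toAdd_mul, Finsupp.add_apply, pow_add, Finset.prod_mul_distrib]

lemma prod_pow_single (x : Fin n → ℚ) (i : Fin n) :
    ∏ j, x j ^ ((Finsupp.single i 1 : Fin n →₀ ℕ) j) = x i := by
  rw [Finset.prod_eq_single_of_mem i (Finset.mem_univ i) fun j _ hj => by
    rw [Finsupp.single_eq_of_ne' (Ne.symm hj), pow_zero]]
  rw [Finsupp.single_eq_same, pow_one]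

lemma chi_injective (n : ℕ) : Function.Injective (chi n) := by
  intro a b h
  have key : ∀ i, Multiplicative.toAdd a i = Multiplicative.toAdd b i := by
    intro i
    have h2 := congrArg (fun φ : Multiplicative (Fin n →₀ ℕ) →* ℚ =>
      φ (Multiplicative.ofAdd (Finsupp.single i 1))) h
    simp only [chi, MonoidHom.coe_mk, OneHom.coe_mk, toAdd_ofAdd] at h2
    rw [prod_pow_single, prod_pow_single] at h2
    exact_mod_cast h2
  have : Multiplicative.toAdd a = Multiplicative.toAdd b := funext key
  exact Multiplicative.toAdd.injective this

lemma expMap_coeff (n : ℕ) (f : MonoidAlgebra ℤ (FreeAb n)) (d : Fin n →₀ ℕ) :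
    (MvPowerSeries.coeff d) (expMap n f) =
      ∑ l ∈ f.coeff.support, (f.coeff l : ℚ) * expElem n l d := by
  have h : expMap n f = f.coeff.sum fun l c => c • expElem n l := rfl
  rw [h, Finsupp.sum, map_sum]
  refine Finset.sum_congr rfl fun l _ => ?_
  rw [map_zsmul]
  show (f.coeff l : ℤ) • (expElem n l d) = _
  rw [zsmul_eq_mul]

/-- for a finitely generated free abelian group `L` (of rank `n`),
the exponential map `exp : ℤ[L] → Ŝ(L)⊗ℚ = ∏_k S^k(L)⊗ℚ`, the linear extension of
`l ↦ Σ_k l^k ⊗ 1/k!`, is an injective ring homomorphism. -/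
theorem stmt12 (n : ℕ) :
    Function.Injective (expMap n) ∧
    expMap n 1 = 1 ∧
    (∀ a b : MonoidAlgebra ℤ (FreeAb n), expMap n (a * b) = expMap n a * expMap n b) := by
  refine ⟨?_, by rw [expMap_eq]; exact map_one _,
    fun a b => by rw [expMap_eq, expMap_eq, expMap_eq]; exact map_mul _ a b⟩
  have hker : ∀ f : MonoidAlgebra ℤ (FreeAb n), expMap n f = 0 → f = 0 := by
    intro f hf
    have hsum : ∀ D : Multiplicative (Fin n →₀ ℕ),
        ∑ l ∈ f.coeff.support, (f.coeff l : ℚ) * chi n l D = 0 := by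
      intro D
      set d : Fin n →₀ ℕ := Multiplicative.toAdd D with hd
      have h0 : (MvPowerSeries.coeff d) (expMap n f) = 0 := by rw [hf]; simp
      rw [expMap_coeff] at h0
      have hrw : ∀ l, expElem n l d = (∏ i, ((d i).factorial : ℚ))⁻¹ * chi n l D :=
        fun l => expElem_apply n l d
      simp_rw [hrw] at h0
      have hc : (∏ i, ((d i).factorial : ℚ)) ≠ 0 :=
        Finset.prod_ne_zero_iff.mpr fun i _ => Nat.cast_ne_zero.mpr (Nat.factorial_ne_zero _)
      have h2 : (∏ i, ((d i).factorial : ℚ))⁻¹ *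
          ∑ l ∈ f.coeff.support, (f.coeff l : ℚ) * chi n l D = 0 := by
        rw [Finset.mul_sum, ← h0]
        exact Finset.sum_congr rfl fun l _ => by ring
      exact (mul_eq_zero.mp h2).resolve_left (inv_ne_zero hc)
    have hfun : ∑ l ∈ f.coeff.support,
        (f.coeff l : ℚ) • (⇑(chi n l) : Multiplicative (Fin n →₀ ℕ) → ℚ) = 0 := by
      funext D
      rw [Finset.sum_apply]
      simpa [smul_eq_mul] using hsum D
    have li : LinearIndependent ℚ
        (fun l : FreeAb n => (⇑(chi n l) : Multiplicative (Fin n →₀ ℕ) → ℚ)) :=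
      (linearIndependent_monoidHom (Multiplicative (Fin n →₀ ℕ)) ℚ).comp (chi n)
        (chi_injective n)
    have hz := linearIndependent_iff'.mp li f.coeff.support (fun l => (f.coeff l : ℚ)) hfun
    ext l
    simp only [MonoidAlgebra.coeff_zero, Finsupp.coe_zero, Pi.zero_apply]
    by_cases hl : l ∈ f.coeff.support
    · have h3 : ((f.coeff l : ℚ)) = 0 := hz l hl
      exact_mod_cast h3
    · exact Finsupp.notMem_support_iff.mp hl
  intro p q hpq
  have h1 : expMap n (p - q) = 0 := by rw [map_sub, hpq, sub_self]
  exact sub_eq_zero.mp (hker _ h1)
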